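/- Let c > 0 and α ∈ (0,1]. There is a constant C = C(c, α) > 0 such that for every continuously differentiable g : ℝ → ℂ with ∫_ℝ |g'(x)|² dx < ∞ and g( ± c·(log(1+n))^α ) = 0 for every integer n ≥ 0, one has |g(x)| ≤ C · e^{−|x|/(2c)} · (∫_ℝ |g'(y)|² dy)^{1/2} for all x ∈ ℝ. -/

import Mathlib

/-!
If `g` vanishes at `z` and `g' ∈ L²`, Cauchy–Schwarz on `[z, x]` gives
`‖g x‖ ≤ √|x - z| · ‖g'‖₂`. The zeros `±c (log (1 + n))^α` are dense enough: with
`u = |x| / c` and `n = ⌊exp (u ^ (1/α))⌋`, the point `(log (1 + n))^α` lies in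
`[u, u + e^{1-u}]`, since `log (1 + n)` overshoots `u ^ (1/α)` by at most `exp (-u ^ (1/α))`
and `t ↦ t^α` is subadditive. Hence a zero lies within `c e^{1 - |x|/c}` of `x`, which gives
the decay `e^{-|x|/(2c)}`.
-/

open MeasureTheory Real

lemma integral_Ioc_norm_le_sqrt_mul_sqrt_integral_sq {E : Type*} [NormedAddCommGroup E]
    {f : ℝ → E} (hf : Continuous f) (hf2 : Integrable (fun x => ‖f x‖ ^ 2))
    {a b : ℝ} (hab : a ≤ b) :
    ∫ t in Set.Ioc a b, ‖f t‖ ≤ √(b - a) * √(∫ t, ‖f t‖ ^ 2) := by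
  have hL2 : MemLp f (ENNReal.ofReal 2) (volume.restrict (Set.Ioc a b)) := by
    rw [ENNReal.ofReal_ofNat, memLp_two_iff_integrable_sq_norm hf.aestronglyMeasurable]
    exact hf2.integrableOn
  have hCS :=
    integral_mul_norm_le_Lp_mul_Lq HolderConjugate.two_two (memLp_const (1 : ℝ)) hL2.norm
  simp only [norm_one, norm_norm, one_mul, one_pow, integral_const, smul_eq_mul, mul_one,
    rpow_two, measureReal_restrict_apply_univ, volume_real_Ioc_of_le hab, ← sqrt_eq_rpow]
    at hCS
  refine hCS.trans (mul_le_mul_of_nonneg_left (sqrt_le_sqrt ?_) (sqrt_nonneg _))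
  exact setIntegral_le_integral hf2 (ae_of_all _ fun _ => by positivity)

lemma norm_sub_le_sqrt_mul_sqrt_integral_deriv_sq {E : Type*} [NormedAddCommGroup E]
    [NormedSpace ℝ E] [CompleteSpace E] {g : ℝ → E} (hg : ContDiff ℝ 1 g)
    (hg' : Integrable (fun x => ‖deriv g x‖ ^ 2)) (x z : ℝ) :
    ‖g x - g z‖ ≤ √|x - z| * √(∫ t, ‖deriv g t‖ ^ 2) := by
  wlog hzx : z ≤ x generalizing x z
  · rw [norm_sub_rev, abs_sub_comm]
    exact this z x (le_of_not_ge hzx)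
  have hcont : Continuous (deriv g) := hg.continuous_deriv le_rfl
  have hftc : ∫ t in z..x, deriv g t = g x - g z :=
    intervalIntegral.integral_deriv_eq_sub (fun t _ => hg.differentiable one_ne_zero t)
      (hcont.intervalIntegrable z x)
  calc ‖g x - g z‖ = ‖∫ t in z..x, deriv g t‖ := by rw [hftc]
    _ ≤ ∫ t in z..x, ‖deriv g t‖ := intervalIntegral.norm_integral_le_integral_norm hzx
    _ = ∫ t in Set.Ioc z x, ‖deriv g t‖ := intervalIntegral.integral_of_le hzx
    _ ≤ √(x - z) * √(∫ t, ‖deriv g t‖ ^ 2) :=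
      integral_Ioc_norm_le_sqrt_mul_sqrt_integral_sq hcont hg' hzx
    _ = √|x - z| * √(∫ t, ‖deriv g t‖ ^ 2) := by rw [abs_of_nonneg (sub_nonneg.2 hzx)]

lemma exists_nat_log_rpow_near {α u : ℝ} (hα0 : 0 < α) (hα1 : α ≤ 1) (hu : 0 ≤ u) :
    ∃ n : ℕ, u ≤ log (1 + n) ^ α ∧ log (1 + n) ^ α ≤ u + exp (1 - u) := by
  set v := u ^ α⁻¹
  have hv : 0 ≤ v := rpow_nonneg hu _
  have hvα : v ^ α = u := rpow_inv_rpow hu hα0.ne'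
  set n := ⌊exp v⌋₊
  have hv_le : v ≤ log (1 + n) := by
    have hn_lt : exp v < 1 + n := by rw [add_comm]; exact Nat.lt_floor_add_one _
    rw [← log_exp v]; exact log_le_log (exp_pos v) hn_lt.le
  have hlog_le : log (1 + n) ≤ v + exp (-v) := by
    rw [log_le_iff_le_exp (by positivity), exp_add]
    calc (1 : ℝ) + n ≤ 1 + exp v := by gcongr; exact Nat.floor_le (exp_pos v).le
      _ = exp v * (exp (-v) + 1) := by rw [mul_add, ← exp_add]; simp
      _ ≤ exp v * exp (exp (-v)) := by gcongr; exact add_one_le_exp _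
  -- weighted AM-GM `v ^ α * 1 ^ (1 - α) ≤ α * v + (1 - α) * 1`
  have hamgm : u ≤ α * v + 1 := by
    have := geom_mean_le_arith_mean2_weighted hα0.le (sub_nonneg.2 hα1) hv zero_le_one
      (add_sub_cancel α 1)
    rw [one_rpow, mul_one, hvα] at this
    linarith
  refine ⟨n, hvα ▸ rpow_le_rpow hv hv_le hα0.le, ?_⟩
  calc log (1 + n) ^ α ≤ (v + exp (-v)) ^ α :=
        rpow_le_rpow (hv.trans hv_le) hlog_le hα0.le
    _ ≤ v ^ α + exp (-v) ^ α := rpow_add_le_add_rpow hv (exp_pos _).le hα0.le hα1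
    _ = u + exp (-(α * v)) := by rw [hvα, ← exp_mul]; ring_nf
    _ ≤ u + exp (1 - u) := by gcongr; linarith

lemma exists_pm_mul_log_rpow_near {c α : ℝ} (hc : 0 < c) (hα0 : 0 < α) (hα1 : α ≤ 1)
    (x : ℝ) :
    ∃ n : ℕ, ∃ z ∈ ({c * log (1 + n) ^ α, -(c * log (1 + n) ^ α)} : Set ℝ),
      |x - z| ≤ c * exp (1 - |x| / c) := by
  obtain ⟨n, hlow, hupp⟩ :=
    exists_nat_log_rpow_near hα0 hα1 (div_nonneg (abs_nonneg x) hc.le)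
  replace hlow : |x| ≤ c * log (1 + n) ^ α := (div_le_iff₀' hc).1 hlow
  replace hupp : c * log (1 + n) ^ α ≤ |x| + c * exp (1 - |x| / c) := by
    have := mul_le_mul_of_nonneg_left hupp hc.le
    rwa [mul_add, mul_div_cancel₀ _ hc.ne'] at this
  -- so that the case split below rewrites `|x|` only outside the error term
  set r := c * exp (1 - |x| / c)
  rcases le_total 0 x with hx | hx
  · refine ⟨n, _, Or.inl rfl, ?_⟩
    rw [abs_of_nonneg hx] at hlow hupp
    rw [abs_sub_comm, abs_of_nonneg (by linarith)]
    linarith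
  · refine ⟨n, _, Or.inr rfl, ?_⟩
    rw [abs_of_nonpos hx] at hlow hupp
    rw [sub_neg_eq_add, abs_of_nonneg (by linarith)]
    linarith

lemma sqrt_mul_exp_one_sub {c : ℝ} (hc : 0 < c) (t : ℝ) :
    √(c * exp (1 - t / c)) = √(c * exp 1) * exp (-t / (2 * c)) := by
  have : exp (1 - t / c) = exp 1 * exp (-t / (2 * c)) ^ 2 := by
    rw [← exp_nat_mul, ← exp_add]; congr 1; field_simp; ring
  rw [this, ← mul_assoc, sqrt_mul (by positivity), sqrt_sq (exp_pos _).le]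

theorem stmt10 (c α : ℝ) (hc : 0 < c) (hα : α ∈ Set.Ioc (0:ℝ) 1) :
    ∃ C : ℝ, 0 < C ∧ ∀ g : ℝ → ℂ, ContDiff ℝ 1 g →
      Integrable (fun x : ℝ => ‖deriv g x‖^2) volume →
      (∀ n : ℕ, g (c * Real.log (1 + (n:ℝ)) ^ α) = 0 ∧
        g (-(c * Real.log (1 + (n:ℝ)) ^ α)) = 0) →
      ∀ x : ℝ, ‖g x‖ ≤ C * Real.exp (-|x| / (2*c)) *
        Real.sqrt (∫ y : ℝ, ‖deriv g y‖^2) := by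
  obtain ⟨hα0, hα1⟩ := hα
  refine ⟨√(c * exp 1), by positivity, fun g hg hg' hzero x => ?_⟩
  obtain ⟨n, z, hz, hxz⟩ := exists_pm_mul_log_rpow_near hc hα0 hα1 x
  have hgz : g z = 0 := by
    rcases hz with rfl | rfl
    exacts [(hzero n).1, (hzero n).2]
  calc ‖g x‖ = ‖g x - g z‖ := by rw [hgz, sub_zero]
    _ ≤ √|x - z| * √(∫ y, ‖deriv g y‖ ^ 2) :=
      norm_sub_le_sqrt_mul_sqrt_integral_deriv_sq hg hg' x z
    _ ≤ √(c * exp (1 - |x| / c)) * √(∫ y, ‖deriv g y‖ ^ 2) := by gcongr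
    _ = √(c * exp 1) * exp (-|x| / (2 * c)) * √(∫ y, ‖deriv g y‖ ^ 2) := by
      rw [sqrt_mul_exp_one_sub hc]
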